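/- Let V ⊆ H with π(V) > 0 and Φ(V) > 0, let 0 < ρ̂ ≤ 1, and let x ∈ X and ρ satisfy ρ > 1/2, ρ ≥ 2ρ̂, and (π(V_x^+)/π(V))² · Φ(V_x^+) ≤ (1−ρ)·Φ(V). Let Φ̂ be a real number with (1 − 1/16)·Φ(V) ≤ Φ̂ ≤ (1 + 1/16)·Φ(V). If E consists of n pairs formed from 2n i.i.d. draws from π|_V, then Pr( (1/n)·ψ(E_x^+) > (1 − ρ̂)·Φ̂ ) ≤ exp( − n·Φ̂² / 40 ). -/

import Mathlib

open MeasureTheory Finset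

/-- `derr D pred h h'` is the hypothesis distance
`d(h,h') = Pr_{x ~ D}(h(x) ≠ h'(x))`. -/
noncomputable def derr {X 𝓗 : Type*} [MeasurableSpace X] (D : Measure X)
    (pred : 𝓗 → X → Bool) (h h' : 𝓗) : ℝ :=
  (D {x | pred h x ≠ pred h' x}).toReal

/-- `pmass π V` is the probability mass `π(V)`. -/
noncomputable def pmass {𝓗 : Type*} (π : 𝓗 → ℝ) (V : Finset 𝓗) : ℝ :=
  ∑ h ∈ V, π h

/-- `avgDiam D pred π V` is the average diameter
`Φ(V) = E_{h,h' ~ π|_V}[d(h,h')]`. -/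
noncomputable def avgDiam {X 𝓗 : Type*} [MeasurableSpace X] (D : Measure X)
    (pred : 𝓗 → X → Bool) (π : 𝓗 → ℝ) (V : Finset 𝓗) : ℝ :=
  (∑ h ∈ V, ∑ h' ∈ V, π h * π h' * derr D pred h h') / (pmass π V) ^ 2

/-- `condw π V h` is the conditional probability `π|_V(h)`. -/
noncomputable def condw {𝓗 : Type*} [DecidableEq 𝓗] (π : 𝓗 → ℝ) (V : Finset 𝓗)
    (h : 𝓗) : ℝ :=
  if h ∈ V then π h / pmass π V else 0

/-! The summand `d(h, h')·[h(x) = h'(x) = 1]` takes values in `[0, 1]`, and its mean under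
`π|_V ⊗ π|_V` is `μ = (π(V_x^+)/π(V))² Φ(V_x^+) ≤ (1 - ρ) Φ(V)`. Exponential Markov with
`λ = 1/3`, together with `e^{λt} ≤ 1 + t (e^λ - 1)` on `[0, 1]`, bounds the tail probability by
`exp(n (μ (e^{1/3} - 1) - (1 - ρ̂) Φ̂ / 3))`; since `e^{1/3} ≤ 7/5`, `ρ̂ ≤ ρ/2` and `Φ̂ ≈ Φ(V)`,
this exponent is at most `-n Φ̂² / 40`. -/

lemma exp_one_div_three_le : Real.exp (1 / 3) ≤ 7 / 5 := by
  have h : Real.exp (1 / 3) ^ 3 ≤ (7 / 5) ^ 3 := by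
    rw [← Real.exp_nat_mul]
    norm_num
    linarith [Real.exp_one_lt_d9]
  exact le_of_pow_le_pow_left₀ (by norm_num) (by norm_num) h

lemma exp_mul_le_one_add_mul {t : ℝ} (ht0 : 0 ≤ t) (ht1 : t ≤ 1) (l : ℝ) :
    Real.exp (l * t) ≤ 1 + t * (Real.exp l - 1) := by
  have h := convexOn_exp.2 (Set.mem_univ 0) (Set.mem_univ l) (sub_nonneg.2 ht1) ht0
    (sub_add_cancel 1 t)
  simp only [smul_eq_mul, mul_zero, zero_add, Real.exp_zero, mul_one] at h
  rw [mul_comm]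
  linarith

section Chernoff

variable {α : Type*} [Fintype α] {w f : α → ℝ}

lemma sum_mul_exp_le_exp_mean (hw0 : ∀ p, 0 ≤ w p) (hw1 : ∑ p, w p = 1)
    (hf0 : ∀ p, 0 ≤ f p) (hf1 : ∀ p, f p ≤ 1) (l : ℝ) :
    ∑ p, w p * Real.exp (l * f p) ≤ Real.exp ((∑ p, w p * f p) * (Real.exp l - 1)) :=
  calc ∑ p, w p * Real.exp (l * f p)
      ≤ ∑ p, (w p + w p * f p * (Real.exp l - 1)) := Finset.sum_le_sum fun p _ => by
        nlinarith [mul_le_mul_of_nonneg_left (exp_mul_le_one_add_mul (hf0 p) (hf1 p) l) (hw0 p)]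
    _ = 1 + (∑ p, w p * f p) * (Real.exp l - 1) := by
        rw [Finset.sum_add_distrib, hw1, Finset.sum_mul]
    _ ≤ _ := by linarith [Real.add_one_le_exp ((∑ p, w p * f p) * (Real.exp l - 1))]

/-- Exponential Markov inequality for the empirical mean of `n` i.i.d. draws from `w`. -/
lemma sum_lt_mean_le_mgf_pow (hw0 : ∀ p, 0 ≤ w p) {l : ℝ} (hl : 0 ≤ l) (a : ℝ) (n : ℕ) :
    (∑ ω : Fin n → α,
        if a < (1 / (n : ℝ)) * ∑ i, f (ω i) then ∏ i, w (ω i) else 0)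
      ≤ (∑ p, w p * Real.exp (l * f p)) ^ n * Real.exp (-(l * (n * a))) := by
  rw [Fintype.sum_pow, Finset.sum_mul]
  refine Finset.sum_le_sum fun ω _ => ?_
  have hw : 0 ≤ ∏ i, w (ω i) := Finset.prod_nonneg fun i _ => hw0 _
  rw [Finset.prod_mul_distrib, ← Real.exp_sum, mul_assoc, ← Real.exp_add]
  split_ifs with hlt
  · have hna : (n : ℝ) * a ≤ ∑ i, f (ω i) := by
      rcases n.eq_zero_or_pos with rfl | hn
      · simp
      · rw [one_div, inv_mul_eq_div, lt_div_iff₀ (by exact_mod_cast hn)] at hlt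
        linarith
    have : 0 ≤ ∑ i, l * f (ω i) + -(l * (n * a)) := by
      rw [← Finset.mul_sum]; nlinarith
    exact le_mul_of_one_le_right hw (Real.one_le_exp this)
  · positivity

lemma sum_lt_mean_le_exp (hw0 : ∀ p, 0 ≤ w p) (hw1 : ∑ p, w p = 1)
    (hf0 : ∀ p, 0 ≤ f p) (hf1 : ∀ p, f p ≤ 1) {l : ℝ} (hl : 0 ≤ l) (a : ℝ) (n : ℕ) :
    (∑ ω : Fin n → α,
        if a < (1 / (n : ℝ)) * ∑ i, f (ω i) then ∏ i, w (ω i) else 0)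
      ≤ Real.exp (n * ((∑ p, w p * f p) * (Real.exp l - 1) - l * a)) := by
  refine (sum_lt_mean_le_mgf_pow hw0 hl a n).trans ?_
  calc (∑ p, w p * Real.exp (l * f p)) ^ n * Real.exp (-(l * (n * a)))
      ≤ Real.exp ((∑ p, w p * f p) * (Real.exp l - 1)) ^ n * Real.exp (-(l * (n * a))) := by
        gcongr
        · exact Finset.sum_nonneg fun p _ => mul_nonneg (hw0 p) (Real.exp_pos _).le
        · exact sum_mul_exp_le_exp_mean hw0 hw1 hf0 hf1 l
    _ = _ := by rw [← Real.exp_nat_mul, ← Real.exp_add]; ring_nf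

end Chernoff

section Diameter

variable {X 𝓗 : Type*} [MeasurableSpace X] {D : Measure X} {pred : 𝓗 → X → Bool}
  {π : 𝓗 → ℝ}

lemma derr_nonneg (h h' : 𝓗) : 0 ≤ derr D pred h h' := ENNReal.toReal_nonneg

lemma derr_le_one [IsProbabilityMeasure D] (h h' : 𝓗) : derr D pred h h' ≤ 1 :=
  ENNReal.toReal_le_of_le_ofReal zero_le_one (by simpa using prob_le_one)

lemma pmass_nonneg (hπ : ∀ h, 0 ≤ π h) (V : Finset 𝓗) : 0 ≤ pmass π V :=
  Finset.sum_nonneg fun h _ => hπ h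

lemma avgDiam_nonneg (hπ : ∀ h, 0 ≤ π h) (V : Finset 𝓗) : 0 ≤ avgDiam D pred π V :=
  div_nonneg (Finset.sum_nonneg fun h _ => Finset.sum_nonneg fun h' _ =>
    mul_nonneg (mul_nonneg (hπ h) (hπ h')) (derr_nonneg h h')) (sq_nonneg _)

lemma avgDiam_le_one [IsProbabilityMeasure D] (hπ : ∀ h, 0 ≤ π h) (V : Finset 𝓗) :
    avgDiam D pred π V ≤ 1 := by
  refine div_le_one_of_le₀ ?_ (sq_nonneg _)
  calc ∑ h ∈ V, ∑ h' ∈ V, π h * π h' * derr D pred h h'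
      ≤ ∑ h ∈ V, ∑ h' ∈ V, π h * π h' :=
        Finset.sum_le_sum fun h _ => Finset.sum_le_sum fun h' _ =>
          mul_le_of_le_one_right (mul_nonneg (hπ h) (hπ h')) (derr_le_one h h')
    _ = pmass π V ^ 2 := by rw [← Finset.sum_mul_sum, sq]; rfl

lemma pmass_sq_mul_avgDiam (hπ : ∀ h, 0 ≤ π h) (V : Finset 𝓗) :
    pmass π V ^ 2 * avgDiam D pred π V
      = ∑ h ∈ V, ∑ h' ∈ V, π h * π h' * derr D pred h h' := by
  by_cases hV : pmass π V = 0
  · have hzero : ∀ h ∈ V, π h = 0 := (Finset.sum_eq_zero_iff_of_nonneg fun h _ => hπ h).1 hV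
    rw [hV, Finset.sum_eq_zero fun h hh => by simp [hzero h hh]]
    ring
  · rw [avgDiam]
    field_simp

end Diameter

section Conditional

variable {𝓗 : Type*} [DecidableEq 𝓗] {π : 𝓗 → ℝ} {V : Finset 𝓗}

lemma condw_nonneg (hπ : ∀ h, 0 ≤ π h) (h : 𝓗) : 0 ≤ condw π V h := by
  unfold condw
  split_ifs
  · exact div_nonneg (hπ h) (pmass_nonneg hπ V)
  · exact le_rfl

lemma sum_condw_mul_condw [Fintype 𝓗] (hV : pmass π V ≠ 0) :
    ∑ p : 𝓗 × 𝓗, condw π V p.1 * condw π V p.2 = 1 := by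
  have hsum : ∑ h, condw π V h = 1 := by
    simp only [condw, Finset.sum_ite_mem, Finset.univ_inter, ← Finset.sum_div]
    exact div_self hV
  rw [Fintype.sum_prod_type, ← Finset.sum_mul_sum, hsum, one_mul]

lemma sum_condw_mul_condw_ite [Fintype 𝓗] (q : 𝓗 → Prop) [DecidablePred q]
    (g : 𝓗 → 𝓗 → ℝ) :
    ∑ p : 𝓗 × 𝓗, condw π V p.1 * condw π V p.2 * (if q p.1 ∧ q p.2 then g p.1 p.2 else 0)
      = (∑ h ∈ V.filter q, ∑ h' ∈ V.filter q, π h * π h' * g h h') / pmass π V ^ 2 := by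
  have hterm (h h' : 𝓗) :
      condw π V h * condw π V h' * (if q h ∧ q h' then g h h' else 0)
        = if h ∈ V.filter q then
            (if h' ∈ V.filter q then π h * π h' * g h h' / pmass π V ^ 2 else 0) else 0 := by
    unfold condw
    simp only [Finset.mem_filter]
    split_ifs <;> simp_all; ring
  simp only [Fintype.sum_prod_type, hterm, Finset.sum_ite_irrel, Finset.sum_const_zero,
    Finset.sum_ite_mem, Finset.univ_inter, Finset.sum_div]

end Conditional

lemma chernoff_exponent_le {μ Φ Φhat ρ rhat : ℝ} (hμ0 : 0 ≤ μ) (hμ : μ ≤ (1 - ρ) * Φ)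
    (hΦ : 0 < Φ) (hΦ1 : Φ ≤ 1) (hρ : 1 / 2 < ρ) (hρr : 2 * rhat ≤ ρ)
    (hΦhat0 : (1 - 1 / 16) * Φ ≤ Φhat) (hΦhat1 : Φhat ≤ (1 + 1 / 16) * Φ) :
    μ * (Real.exp (1 / 3) - 1) - 1 / 3 * ((1 - rhat) * Φhat) ≤ -Φhat ^ 2 / 40 := by
  have hL : Real.exp (1 / 3) - 1 ≤ 2 / 5 := by linarith [exp_one_div_three_le]
  have hρ1 : 0 ≤ 1 - ρ := nonneg_of_mul_nonneg_left (hμ0.trans hμ) hΦ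
  have hμL : μ * (Real.exp (1 / 3) - 1) ≤ (1 - ρ) * Φ * (2 / 5) :=
    mul_le_mul hμ hL (by linarith [Real.add_one_le_exp (1 / 3 : ℝ)]) (hμ0.trans hμ)
  nlinarith

theorem stmt_12_general {X 𝓗 : Type*} [MeasurableSpace X] [Fintype 𝓗] [DecidableEq 𝓗]
    (D : Measure X) [IsProbabilityMeasure D] (pred : 𝓗 → X → Bool)
    (π : 𝓗 → ℝ) (hπpos : ∀ h, 0 < π h)
    (V : Finset 𝓗) (hV : 0 < pmass π V) (hΦ : 0 < avgDiam D pred π V)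
    (rhat : ℝ)
    (x : X) (ρ : ℝ) (hρlb : 1 / 2 < ρ) (hρr : 2 * rhat ≤ ρ)
    (hx : (pmass π (V.filter fun h => pred h x = true) / pmass π V) ^ 2
            * avgDiam D pred π (V.filter fun h => pred h x = true)
          ≤ (1 - ρ) * avgDiam D pred π V)
    (Φhat : ℝ)
    (hΦhat0 : (1 - 1 / 16) * avgDiam D pred π V ≤ Φhat)
    (hΦhat1 : Φhat ≤ (1 + 1 / 16) * avgDiam D pred π V)
    (n : ℕ) :
    (∑ ω : Fin n → 𝓗 × 𝓗,
        if (1 - rhat) * Φhat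
            < (1 / (n : ℝ)) * (∑ i,
                if pred (ω i).1 x = true ∧ pred (ω i).2 x = true
                then derr D pred (ω i).1 (ω i).2 else 0)
        then ∏ i, condw π V (ω i).1 * condw π V (ω i).2 else 0)
      ≤ Real.exp (-((n : ℝ) * Φhat ^ 2) / 40) := by
  have hπ : ∀ h, 0 ≤ π h := fun h => (hπpos h).le
  set Vx := V.filter fun h => pred h x = true
  have hmean : ∑ p : 𝓗 × 𝓗, condw π V p.1 * condw π V p.2 *
      (if pred p.1 x = true ∧ pred p.2 x = true then derr D pred p.1 p.2 else 0)
        = (pmass π Vx / pmass π V) ^ 2 * avgDiam D pred π Vx := by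
    rw [sum_condw_mul_condw_ite (fun h => pred h x = true), div_pow, div_mul_eq_mul_div,
      pmass_sq_mul_avgDiam hπ]
  have hexponent := chernoff_exponent_le (mul_nonneg (sq_nonneg _) (avgDiam_nonneg hπ Vx))
    hx hΦ (avgDiam_le_one hπ V) hρlb hρr hΦhat0 hΦhat1
  set w : 𝓗 × 𝓗 → ℝ := fun p => condw π V p.1 * condw π V p.2
  set f : 𝓗 × 𝓗 → ℝ := fun p =>
    if pred p.1 x = true ∧ pred p.2 x = true then derr D pred p.1 p.2 else 0
  have hf0 (p : 𝓗 × 𝓗) : 0 ≤ f p := by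
    simp only [f]; split_ifs; exacts [derr_nonneg _ _, le_rfl]
  have hf1 (p : 𝓗 × 𝓗) : f p ≤ 1 := by
    simp only [f]; split_ifs; exacts [derr_le_one _ _, zero_le_one]
  refine (sum_lt_mean_le_exp (w := w) (f := f)
    (fun p => mul_nonneg (condw_nonneg hπ p.1) (condw_nonneg hπ p.2))
    (sum_condw_mul_condw hV.ne') hf0 hf1 (by norm_num : (0 : ℝ) ≤ 1 / 3)
    _ n).trans (Real.exp_le_exp.2 ?_)
  rw [hmean]
  linarith [mul_le_mul_of_nonneg_left hexponent (Nat.cast_nonneg n)]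

/-- if `(π(V_x^+)/π(V))² Φ(V_x^+) ≤ (1-ρ) Φ(V)` with `ρ > 1/2`,
`ρ ≥ 2ρ̂`, and `(1 - 1/16) Φ(V) ≤ Φ̂ ≤ (1 + 1/16) Φ(V)`, then
`Pr((1/n) ψ(E_x^+) > (1 - ρ̂) Φ̂) ≤ exp(-n Φ̂²/40)`. -/
theorem stmt_12 {X 𝓗 : Type*} [MeasurableSpace X] [Fintype 𝓗] [DecidableEq 𝓗]
    (D : Measure X) [IsProbabilityMeasure D] (pred : 𝓗 → X → Bool)
    (π : 𝓗 → ℝ) (hπpos : ∀ h, 0 < π h) (hπsum : ∑ h, π h = 1)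
    (V : Finset 𝓗) (hV : 0 < pmass π V) (hΦ : 0 < avgDiam D pred π V)
    (rhat : ℝ) (hr0 : 0 < rhat) (hr1 : rhat ≤ 1)
    (x : X) (ρ : ℝ) (hρlb : 1 / 2 < ρ) (hρr : 2 * rhat ≤ ρ)
    (hx : (pmass π (V.filter fun h => pred h x = true) / pmass π V) ^ 2
            * avgDiam D pred π (V.filter fun h => pred h x = true)
          ≤ (1 - ρ) * avgDiam D pred π V)
    (Φhat : ℝ)
    (hΦhat0 : (1 - 1 / 16) * avgDiam D pred π V ≤ Φhat)
    (hΦhat1 : Φhat ≤ (1 + 1 / 16) * avgDiam D pred π V)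
    (n : ℕ) :
    (∑ ω : Fin n → 𝓗 × 𝓗,
        if (1 - rhat) * Φhat
            < (1 / (n : ℝ)) * (∑ i,
                if pred (ω i).1 x = true ∧ pred (ω i).2 x = true
                then derr D pred (ω i).1 (ω i).2 else 0)
        then ∏ i, condw π V (ω i).1 * condw π V (ω i).2 else 0)
      ≤ Real.exp (-((n : ℝ) * Φhat ^ 2) / 40) :=
  stmt_12_general D pred π hπpos V hV hΦ rhat x ρ hρlb hρr hx Φhat hΦhat0 hΦhat1 n
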